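/- arXiv:2305.14765 — 2 statements merged into one kernel-verified Lean document; each statement's English description precedes it below -/
import Mathlib

section
/- Let 0 < ε ≤ 1, σ0 > 0, and suppose |μ − μ0| ≤ σ0·ε/2 and σ0² ≤ σ² ≤ (1 + ε²)·σ0². Then KL(N(μ0, σ0²) ‖ N(μ, σ²)) ≤ ε². -/
open MeasureTheory ProbabilityTheory Real Set
open scoped NNReal ENNReal

lemma int_x_exp {b : ℝ} (hb : 0 < b) : ∫ x : ℝ, x * rexp (-b * x ^ 2) = 0 := by
  set f : ℝ → ℝ := fun x => x * rexp (-b * x ^ 2) with hf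
  have hi := integrable_mul_exp_neg_mul_sq hb
  have h1 : ∫ x in Iic (0:ℝ), f x = - ∫ x in Ioi (0:ℝ), f x := by
    have := integral_comp_neg_Ioi (0:ℝ) f
    rw [neg_zero] at this
    rw [← this]
    simp only [hf, neg_sq, neg_mul]
    rw [integral_neg]
  have h2 : ∫ x, f x = (∫ x in Iic (0:ℝ), f x) + ∫ x in Ioi (0:ℝ), f x := by
    rw [← setIntegral_union (Iic_disjoint_Ioi le_rfl) measurableSet_Ioi
      hi.integrableOn hi.integrableOn, Iic_union_Ioi, setIntegral_univ]
  rw [h2, h1, neg_add_cancel]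

lemma int_x2_exp {b : ℝ} (hb : 0 < b) :
    ∫ x : ℝ, x ^ 2 * rexp (-b * x ^ 2) = √(π / b) / (2 * b) := by
  have habs : ∀ x : ℝ, |x| ^ 2 * rexp (-b * |x| ^ 2) = x ^ 2 * rexp (-b * x ^ 2) := by
    intro x; rw [sq_abs]
  have h := integral_comp_abs (f := fun x : ℝ => x ^ 2 * rexp (-b * x ^ 2))
  simp only [habs] at h
  rw [h]
  have h2 : ∫ x in Ioi (0:ℝ), x ^ 2 * rexp (-b * x ^ 2)
      = b ^ (-(3:ℝ)/2) * (1/2) * Real.Gamma ((3:ℝ)/2) := by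
    have := integral_rpow_mul_exp_neg_mul_rpow (p := 2) (q := 2) (b := b)
      (by norm_num) (by norm_num) hb
    simp only [show ((2:ℝ)) = ((2:ℕ):ℝ) by norm_num, rpow_natCast] at this
    rw [this]; norm_num
  have hΓ : Real.Gamma ((3:ℝ)/2) = √π / 2 := by
    rw [show ((3:ℝ)/2) = 1/2 + 1 by norm_num, Real.Gamma_add_one (by norm_num),
      Real.Gamma_one_half_eq]
    ring
  have hbpow : b ^ (-(3:ℝ)/2) = (√b)⁻¹ * b⁻¹ := by
    rw [show -(3:ℝ)/2 = -(1/2) + -1 by norm_num, Real.rpow_add hb, Real.rpow_neg_one,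
      Real.rpow_neg hb.le, ← Real.sqrt_eq_rpow]
  have hsb : √b ≠ 0 := by positivity
  rw [h2, hΓ, hbpow, Real.sqrt_div pi_pos.le]
  field_simp

lemma integrable_x2_exp {b : ℝ} (hb : 0 < b) :
    Integrable (fun x : ℝ => x ^ 2 * rexp (-b * x ^ 2)) := by
  have := integrable_rpow_mul_exp_neg_mul_sq hb (s := 2) (by norm_num)
  simpa only [show ((2:ℝ)) = ((2:ℕ):ℝ) by norm_num, rpow_natCast] using this

lemma aux_eq (b d K : ℝ) :
    (fun y : ℝ => K * rexp (-b * y ^ 2) * (y + d) ^ 2)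
      = fun y : ℝ => K * (y ^ 2 * rexp (-b * y ^ 2)) + (K * (2 * d)) * (y * rexp (-b * y ^ 2))
        + (K * d ^ 2) * rexp (-b * y ^ 2) := by
  funext y; ring

lemma integrable_aux {b : ℝ} (hb : 0 < b) (d K : ℝ) :
    Integrable (fun y : ℝ => K * rexp (-b * y ^ 2) * (y + d) ^ 2) := by
  rw [aux_eq]
  exact (((integrable_x2_exp hb).const_mul K).add
    ((integrable_mul_exp_neg_mul_sq hb).const_mul _)).add
    ((integrable_exp_neg_mul_sq hb).const_mul _)

lemma integral_aux {b : ℝ} (hb : 0 < b) (d K : ℝ) :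
    ∫ y : ℝ, K * rexp (-b * y ^ 2) * (y + d) ^ 2
      = K * (√(π / b) / (2 * b)) + K * d ^ 2 * √(π / b) := by
  rw [aux_eq]
  have e1 := integral_add (f := fun y : ℝ => K * (y ^ 2 * rexp (-b * y ^ 2))
      + (K * (2 * d)) * (y * rexp (-b * y ^ 2)))
    (g := fun y : ℝ => (K * d ^ 2) * rexp (-b * y ^ 2))
    (((integrable_x2_exp hb).const_mul K).add
      ((integrable_mul_exp_neg_mul_sq hb).const_mul _))
    ((integrable_exp_neg_mul_sq hb).const_mul _)
  have e2 := integral_add (f := fun y : ℝ => K * (y ^ 2 * rexp (-b * y ^ 2)))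
    (g := fun y : ℝ => (K * (2 * d)) * (y * rexp (-b * y ^ 2)))
    ((integrable_x2_exp hb).const_mul K)
    ((integrable_mul_exp_neg_mul_sq hb).const_mul _)
  rw [e1, e2]
  simp only [integral_const_mul]
  rw [int_x_exp hb, int_x2_exp hb, integral_gaussian]
  ring

lemma pdf_mul_sq_eq (μ0 c : ℝ) (v : ℝ≥0) :
    (fun x : ℝ => gaussianPDFReal μ0 v x * (x - c) ^ 2)
      = fun x : ℝ => (fun y : ℝ => (√(2 * π * v))⁻¹ * rexp (-(2 * (v:ℝ))⁻¹ * y ^ 2)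
          * (y + (μ0 - c)) ^ 2) (x - μ0) := by
  funext x
  simp only [gaussianPDFReal]
  have h1 : -(x - μ0) ^ 2 / (2 * (v:ℝ)) = -(2 * (v:ℝ))⁻¹ * (x - μ0) ^ 2 := by ring
  have h2 : (x - c) = (x - μ0) + (μ0 - c) := by ring
  rw [h1, h2]

lemma integrable_pdf_mul_sq (μ0 c : ℝ) {v : ℝ≥0} (hv : v ≠ 0) :
    Integrable (fun x : ℝ => gaussianPDFReal μ0 v x * (x - c) ^ 2) := by
  have hvr : (0:ℝ) < v := NNReal.coe_pos.mpr (pos_iff_ne_zero.mpr hv)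
  have hb : (0:ℝ) < (2 * (v:ℝ))⁻¹ := by positivity
  rw [pdf_mul_sq_eq]
  exact (integrable_aux hb (μ0 - c) (√(2 * π * v))⁻¹).comp_sub_right μ0

lemma integral_pdf_mul_sq (μ0 c : ℝ) {v : ℝ≥0} (hv : v ≠ 0) :
    ∫ x : ℝ, gaussianPDFReal μ0 v x * (x - c) ^ 2 = (v:ℝ) + (μ0 - c) ^ 2 := by
  have hvr : (0:ℝ) < v := NNReal.coe_pos.mpr (pos_iff_ne_zero.mpr hv)
  have hb : (0:ℝ) < (2 * (v:ℝ))⁻¹ := by positivity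
  rw [pdf_mul_sq_eq]
  rw [integral_sub_right_eq_self (fun y : ℝ => (√(2 * π * v))⁻¹
    * rexp (-(2 * (v:ℝ))⁻¹ * y ^ 2) * (y + (μ0 - c)) ^ 2) μ0]
  rw [integral_aux hb (μ0 - c) (√(2 * π * v))⁻¹]
  have hπ : π / (2 * (v:ℝ))⁻¹ = 2 * π * v := by
    field_simp
  rw [hπ]
  have hS : (0:ℝ) < √(2 * π * v) := by positivity
  field_simp

lemma integral_gaussianReal_eq (μ0 : ℝ) {v : ℝ≥0} (hv : v ≠ 0) (g : ℝ → ℝ) :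
    ∫ x, g x ∂(gaussianReal μ0 v) = ∫ x, gaussianPDFReal μ0 v x * g x := by
  rw [gaussianReal_of_var_ne_zero _ hv]
  have hd : gaussianPDF μ0 v = fun x => ((gaussianPDFReal μ0 v x).toNNReal : ℝ≥0∞) := rfl
  rw [hd, integral_withDensity_eq_integral_smul
    ((measurable_gaussianPDFReal μ0 v).real_toNNReal) g]
  congr 1
  funext x
  rw [NNReal.smul_def, smul_eq_mul, Real.coe_toNNReal _ (gaussianPDFReal_nonneg μ0 v x)]

/-- If `0 < ε ≤ 1`, `σ0 > 0`, `|μ − μ0| ≤ σ0·ε/2` and `σ0² ≤ σ² ≤ (1 + ε²)·σ0²`, then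
the Kullback–Leibler divergence `KL(N(μ0, σ0²) ‖ N(μ, σ²)) = ∫ log(dP/dQ) dP` is at most `ε²`. -/
theorem klDiv_gaussian_le_eps_sq (μ0 μ σ0 σ ε : ℝ) (hσ0 : 0 < σ0) (hσ : 0 < σ)
    (hε0 : 0 < ε) (hε1 : ε ≤ 1) (hμ : |μ - μ0| ≤ σ0 * ε / 2)
    (hlo : σ0 ^ 2 ≤ σ ^ 2) (hhi : σ ^ 2 ≤ (1 + ε ^ 2) * σ0 ^ 2) :
    (∫ x, Real.log (gaussianPDFReal μ0 (σ0 ^ 2).toNNReal x /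
        gaussianPDFReal μ (σ ^ 2).toNNReal x)
      ∂(gaussianReal μ0 (σ0 ^ 2).toNNReal)) ≤ ε ^ 2 := by
  set v0 : ℝ≥0 := (σ0 ^ 2).toNNReal with hv0def
  set v1 : ℝ≥0 := (σ ^ 2).toNNReal with hv1def
  have hσ02 : (0:ℝ) < σ0 ^ 2 := by positivity
  have hσ2 : (0:ℝ) < σ ^ 2 := by positivity
  have hv0c : ((v0 : ℝ)) = σ0 ^ 2 := Real.coe_toNNReal _ hσ02.le
  have hv1c : ((v1 : ℝ)) = σ ^ 2 := Real.coe_toNNReal _ hσ2.le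
  have hv0 : v0 ≠ 0 := by
    simp only [hv0def, ne_eq, Real.toNNReal_eq_zero, not_le]
    exact hσ02
  have hv1 : v1 ≠ 0 := by
    simp only [hv1def, ne_eq, Real.toNNReal_eq_zero, not_le]
    exact hσ2
  set C : ℝ := Real.log (√(2 * π * σ ^ 2)) - Real.log (√(2 * π * σ0 ^ 2)) with hC
  -- pointwise identity
  have hlog : ∀ x : ℝ, Real.log (gaussianPDFReal μ0 v0 x / gaussianPDFReal μ v1 x)
      = C + (2 * σ ^ 2)⁻¹ * (x - μ) ^ 2 - (2 * σ0 ^ 2)⁻¹ * (x - μ0) ^ 2 := by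
    intro x
    have hp0 : 0 < gaussianPDFReal μ0 v0 x := gaussianPDFReal_pos _ _ _ hv0
    have hp1 : 0 < gaussianPDFReal μ v1 x := gaussianPDFReal_pos _ _ _ hv1
    rw [Real.log_div hp0.ne' hp1.ne']
    simp only [gaussianPDFReal, hv0c, hv1c]
    rw [Real.log_mul (by positivity) (Real.exp_pos _).ne',
      Real.log_mul (by positivity) (Real.exp_pos _).ne',
      Real.log_exp, Real.log_exp, Real.log_inv, Real.log_inv]
    ring
  rw [integral_gaussianReal_eq μ0 hv0]
  simp only [hlog]
  -- rewrite integrand as combination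
  have hsplit : (fun x : ℝ => gaussianPDFReal μ0 v0 x *
        (C + (2 * σ ^ 2)⁻¹ * (x - μ) ^ 2 - (2 * σ0 ^ 2)⁻¹ * (x - μ0) ^ 2))
      = fun x : ℝ => (C * gaussianPDFReal μ0 v0 x
          + (2 * σ ^ 2)⁻¹ * (gaussianPDFReal μ0 v0 x * (x - μ) ^ 2))
          - (2 * σ0 ^ 2)⁻¹ * (gaussianPDFReal μ0 v0 x * (x - μ0) ^ 2) := by
    funext x; ring
  rw [hsplit]
  have i1 : Integrable (fun x : ℝ => C * gaussianPDFReal μ0 v0 x) :=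
    (integrable_gaussianPDFReal μ0 v0).const_mul C
  have i2 : Integrable (fun x : ℝ =>
      (2 * σ ^ 2)⁻¹ * (gaussianPDFReal μ0 v0 x * (x - μ) ^ 2)) :=
    (integrable_pdf_mul_sq μ0 μ hv0).const_mul _
  have i3 : Integrable (fun x : ℝ =>
      (2 * σ0 ^ 2)⁻¹ * (gaussianPDFReal μ0 v0 x * (x - μ0) ^ 2)) :=
    (integrable_pdf_mul_sq μ0 μ0 hv0).const_mul _
  have e1 := integral_sub (μ := volume) (f := fun x : ℝ => C * gaussianPDFReal μ0 v0 x
      + (2 * σ ^ 2)⁻¹ * (gaussianPDFReal μ0 v0 x * (x - μ) ^ 2))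
    (g := fun x : ℝ => (2 * σ0 ^ 2)⁻¹ * (gaussianPDFReal μ0 v0 x * (x - μ0) ^ 2))
    (i1.add i2) i3
  have e2 := integral_add (μ := volume) (f := fun x : ℝ => C * gaussianPDFReal μ0 v0 x)
    (g := fun x : ℝ => (2 * σ ^ 2)⁻¹ * (gaussianPDFReal μ0 v0 x * (x - μ) ^ 2)) i1 i2
  rw [e1, e2]
  simp only [integral_const_mul]
  rw [integral_gaussianPDFReal_eq_one μ0 hv0,
    integral_pdf_mul_sq μ0 μ hv0, integral_pdf_mul_sq μ0 μ0 hv0, hv0c]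
  -- now pure arithmetic
  have hCle : C ≤ ε ^ 2 / 2 := by
    rw [hC, Real.log_sqrt (by positivity), Real.log_sqrt (by positivity)]
    have h1 : Real.log (2 * π * σ ^ 2) - Real.log (2 * π * σ0 ^ 2)
        = Real.log ((2 * π * σ ^ 2) / (2 * π * σ0 ^ 2)) :=
      (Real.log_div (by positivity) (by positivity)).symm
    have h2 : (2 * π * σ ^ 2) / (2 * π * σ0 ^ 2) = σ ^ 2 / σ0 ^ 2 := by
      rw [mul_div_mul_left _ _ (by positivity)]
    have h3 : σ ^ 2 / σ0 ^ 2 ≤ 1 + ε ^ 2 := by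
      rw [div_le_iff₀ hσ02]; linarith
    have h4 : Real.log (σ ^ 2 / σ0 ^ 2) ≤ Real.log (1 + ε ^ 2) := by
      gcongr
    have h5 : Real.log (1 + ε ^ 2) ≤ ε ^ 2 := by
      have := Real.log_le_sub_one_of_pos (show (0:ℝ) < 1 + ε ^ 2 by positivity)
      linarith
    have h6 : Real.log (2 * π * σ ^ 2) - Real.log (2 * π * σ0 ^ 2) ≤ ε ^ 2 := by
      rw [h1, h2]; linarith
    linarith
  have hd2 : (μ0 - μ) ^ 2 ≤ σ0 ^ 2 * ε ^ 2 / 4 := by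
    have h := pow_le_pow_left₀ (abs_nonneg _) hμ 2
    rw [sq_abs] at h
    nlinarith [h]
  have hterm1 : (2 * σ ^ 2)⁻¹ * σ0 ^ 2 ≤ 1 / 2 := by
    rw [inv_mul_le_iff₀ (by positivity)]
    linarith
  have hterm2 : (2 * σ ^ 2)⁻¹ * (μ0 - μ) ^ 2 ≤ ε ^ 2 / 8 := by
    have hle : (2 * σ ^ 2)⁻¹ ≤ (2 * σ0 ^ 2)⁻¹ := by
      apply inv_anti₀ (by positivity)
      linarith
    have : (2 * σ ^ 2)⁻¹ * (μ0 - μ) ^ 2 ≤ (2 * σ0 ^ 2)⁻¹ * (σ0 ^ 2 * ε ^ 2 / 4) :=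
      mul_le_mul hle hd2 (sq_nonneg _) (by positivity)
    have heq : (2 * σ0 ^ 2)⁻¹ * (σ0 ^ 2 * ε ^ 2 / 4) = ε ^ 2 / 8 := by
      field_simp; ring
    linarith
  have heq0 : (2 * σ0 ^ 2)⁻¹ * (σ0 ^ 2 + (μ0 - μ0) ^ 2) = 1 / 2 := by
    field_simp <;> ring
  have hexp : (2 * σ ^ 2)⁻¹ * (σ0 ^ 2 + (μ0 - μ) ^ 2)
      = (2 * σ ^ 2)⁻¹ * σ0 ^ 2 + (2 * σ ^ 2)⁻¹ * (μ0 - μ) ^ 2 := by ring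
  linarith [hCle, hterm1, hterm2, sq_nonneg ε]
end

section
/- Let p1, p2 be probability densities of Bernoulli-type distributions on {0,1} with success probabilities ϕ(f1(x)) and ϕ(f2(x)), where ϕ is the sigmoid and |f1(x)|, |f2(x)| ≤ F. Then there exist constants c1, c2 > 0 depending only on F such that c1·(ϕ(f1(x)) − ϕ(f2(x)))² ≤ H²(x) ≤ c2·(ϕ(f1(x)) − ϕ(f2(x)))², where H²(x) is the squared Hellinger distance between Bernoulli(ϕ(f1(x))) and Bernoulli(ϕ(f2(x))). -/
open Real

/-- Sigmoid function `ϕ(x) = 1/(1 + e^{−x})`. -/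
noncomputable def sigmoid (x : ℝ) : ℝ := 1 / (1 + Real.exp (-x))

lemma sigmoid_pos (t : ℝ) : 0 < _root_.sigmoid t := by
  unfold _root_.sigmoid
  positivity

lemma sigmoid_mono {s t : ℝ} (h : s ≤ t) : _root_.sigmoid s ≤ _root_.sigmoid t := by
  unfold _root_.sigmoid
  have h1 : 0 < 1 + Real.exp (-t) := by positivity
  apply one_div_le_one_div_of_le h1
  have := Real.exp_le_exp.mpr (neg_le_neg h)
  linarith

lemma sigmoid_neg (t : ℝ) : _root_.sigmoid (-t) = 1 - _root_.sigmoid t := by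
  unfold _root_.sigmoid
  have h1 : 0 < 1 + Real.exp (-t) := by positivity
  have h2 : 0 < 1 + Real.exp t := by positivity
  have he : Real.exp t * Real.exp (-t) = 1 := by
    rw [← Real.exp_add]; simp
  field_simp
  nlinarith

lemma key (m a b : ℝ) (hm : 0 < m) (hma : m ≤ a) (hmb : m ≤ b)
    (ha1 : a ≤ 1) (hb1 : b ≤ 1) :
    (1/4) * (a - b)^2 ≤ (Real.sqrt a - Real.sqrt b)^2 ∧
    (Real.sqrt a - Real.sqrt b)^2 ≤ (a - b)^2 / (4 * m) := by
  have ha0 : (0:ℝ) ≤ a := le_trans hm.le hma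
  have hb0 : (0:ℝ) ≤ b := le_trans hm.le hmb
  have hsa : Real.sqrt a ^ 2 = a := Real.sq_sqrt ha0
  have hsb : Real.sqrt b ^ 2 = b := Real.sq_sqrt hb0
  have hsa1 : Real.sqrt a ≤ 1 := by rw [show (1:ℝ) = Real.sqrt 1 by simp]; exact Real.sqrt_le_sqrt ha1
  have hsb1 : Real.sqrt b ≤ 1 := by rw [show (1:ℝ) = Real.sqrt 1 by simp]; exact Real.sqrt_le_sqrt hb1
  have hsma : Real.sqrt m ≤ Real.sqrt a := Real.sqrt_le_sqrt hma
  have hsmb : Real.sqrt m ≤ Real.sqrt b := Real.sqrt_le_sqrt hmb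
  have hsm : Real.sqrt m ^ 2 = m := Real.sq_sqrt hm.le
  have hsm0 : 0 < Real.sqrt m := Real.sqrt_pos.mpr hm
  have heq : (a - b)^2 = (Real.sqrt a - Real.sqrt b)^2 * (Real.sqrt a + Real.sqrt b)^2 := by
    nlinarith [Real.sqrt_nonneg a, Real.sqrt_nonneg b]
  constructor
  · nlinarith [sq_nonneg (Real.sqrt a - Real.sqrt b), Real.sqrt_nonneg a, Real.sqrt_nonneg b]
  · rw [le_div_iff₀ (by positivity)]
    have hs : 4 * m ≤ (Real.sqrt a + Real.sqrt b)^2 := by nlinarith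
    nlinarith [mul_le_mul_of_nonneg_left hs (sq_nonneg (Real.sqrt a - Real.sqrt b))]

/-- For `F > 0` there exist constants `c1, c2 > 0` depending only on `F` such that for all
functions `f1, f2` bounded by `F` at a point `x`, the squared Hellinger distance between
`Bernoulli(ϕ(f1(x)))` and `Bernoulli(ϕ(f2(x)))` is sandwiched between
`c1·(ϕ(f1(x)) − ϕ(f2(x)))²` and `c2·(ϕ(f1(x)) − ϕ(f2(x)))²`. -/
theorem hellinger_sq_bernoulli_sigmoid_equiv {X : Type*} (F : ℝ) (hF : 0 < F) :
    ∃ c1 c2 : ℝ, 0 < c1 ∧ 0 < c2 ∧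
      ∀ (f1 f2 : X → ℝ) (x : X), |f1 x| ≤ F → |f2 x| ≤ F →
        c1 * (_root_.sigmoid (f1 x) - _root_.sigmoid (f2 x)) ^ 2 ≤
          (Real.sqrt (_root_.sigmoid (f1 x)) - Real.sqrt (_root_.sigmoid (f2 x))) ^ 2 +
            (Real.sqrt (1 - _root_.sigmoid (f1 x)) - Real.sqrt (1 - _root_.sigmoid (f2 x))) ^ 2 ∧
        (Real.sqrt (_root_.sigmoid (f1 x)) - Real.sqrt (_root_.sigmoid (f2 x))) ^ 2 +
            (Real.sqrt (1 - _root_.sigmoid (f1 x)) - Real.sqrt (1 - _root_.sigmoid (f2 x))) ^ 2 ≤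
          c2 * (_root_.sigmoid (f1 x) - _root_.sigmoid (f2 x)) ^ 2 := by
  set m := _root_.sigmoid (-F) with hmdef
  have hm : 0 < m := _root_.sigmoid_pos _
  refine ⟨1/2, 1/(2*m), by norm_num, by positivity, ?_⟩
  intro f1 f2 x h1 h2
  set p := _root_.sigmoid (f1 x)
  set q := _root_.sigmoid (f2 x)
  have hbound : ∀ t : ℝ, |t| ≤ F → m ≤ _root_.sigmoid t ∧ _root_.sigmoid t ≤ 1 - m := by
    intro t ht
    rw [abs_le] at ht
    refine ⟨_root_.sigmoid_mono ht.1, ?_⟩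
    rw [← _root_.sigmoid_neg]
    exact _root_.sigmoid_mono (by rw [neg_neg]; exact ht.2)
  obtain ⟨hp1, hp2⟩ := hbound _ h1
  obtain ⟨hq1, hq2⟩ := hbound _ h2
  have k1 := key m p q hm hp1 hq1 (by linarith) (by linarith)
  have k2 := key m (1-p) (1-q) hm (by linarith) (by linarith) (by linarith) (by linarith)
  have hpq : ((1-p) - (1-q))^2 = (p - q)^2 := by ring
  rw [hpq] at k2
  constructor
  · nlinarith [k1.1, k2.1]
  · have := k1.2
    have := k2.2
    have h4 : (p-q)^2 / (4*m) + (p-q)^2 / (4*m) = 1/(2*m) * (p-q)^2 := by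
      field_simp; ring
    linarith
end
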